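/- Let D be a state divergence (a map assigning to every pair of density matrices on any finite-dimensional system an extended real number, satisfying the data processing inequality D(E(ρ)‖E(σ)) ≤ D(ρ‖σ) for every quantum channel E) that is superadditive under tensor products (D(ρ₁⊗ρ₂ ‖ σ₁⊗σ₂) ≥ D(ρ₁‖σ₁) + D(ρ₂‖σ₂)) and normalized (D(ρ‖ρ) = 0 for every density matrix ρ). Then for all quantum channels N, M from matrices on A to matrices on B: D(N‖M) ≤ D^reg(N‖M) ≤ D^A(N‖M). -/

import Mathlib

open scoped Kronecker ComplexOrder Classical

noncomputable section

/-- Square complex matrices indexed by `ι`. -/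
abbrev MatC (ι : Type*) := Matrix ι ι ℂ

/-- A density matrix: positive semidefinite with trace one. -/
def IsDensity {ι : Type*} [Fintype ι] (ρ : MatC ι) : Prop :=
  ρ.PosSemidef ∧ ρ.trace = 1

/-- Functional calculus for Hermitian matrices (junk value `0` otherwise). -/
def funCalc {ι : Type*} [Fintype ι] [DecidableEq ι] (X : MatC ι) (f : ℝ → ℝ) : MatC ι :=
  if hX : X.IsHermitian then
    (hX.eigenvectorUnitary : MatC ι) * Matrix.diagonal (fun i => (f (hX.eigenvalues i) : ℂ)) *
      star (hX.eigenvectorUnitary : MatC ι)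
  else 0

/-- Real matrix power by functional calculus, with the convention `0 ^ t = 0`
(powers taken on the support). -/
def matPow {ι : Type*} [Fintype ι] [DecidableEq ι] (X : MatC ι) (t : ℝ) : MatC ι :=
  funCalc X fun x => if x ≤ 0 then 0 else Real.rpow x t

/-- Base-2 matrix logarithm by functional calculus on the support. -/
def matLog2 {ι : Type*} [Fintype ι] [DecidableEq ι] (X : MatC ι) : MatC ι :=
  funCalc X fun x => if x ≤ 0 then 0 else Real.logb 2 x

/-- Trace of the positive part of a Hermitian matrix: the sum of its nonnegative
eigenvalues (junk value `0` for non-Hermitian input). -/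
def trPos {ι : Type*} [Fintype ι] [DecidableEq ι] (X : MatC ι) : ℝ :=
  if hX : X.IsHermitian then ∑ i, max (hX.eigenvalues i) 0 else 0

/-- Largest eigenvalue (operator norm for PSD matrices). -/
def maxEig {ι : Type*} [Fintype ι] [DecidableEq ι] (X : MatC ι) : ℝ :=
  if hX : X.IsHermitian then ⨆ i, hX.eigenvalues i else 0

/-- Support inclusion `supp ρ ⊆ supp σ`, expressed via kernels. -/
def SuppLe {ι : Type*} [Fintype ι] (ρ σ : MatC ι) : Prop :=
  ∀ v : ι → ℂ, σ.mulVec v = 0 → ρ.mulVec v = 0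

/-- `−log₂` with the convention `−log₂ 0 = +∞`, valued in extended reals. -/
def negLog2 (x : ℝ) : EReal := if x ≤ 0 then ⊤ else ((-Real.logb 2 x : ℝ) : EReal)

/-- `log₂` with the convention `log₂ 0 = −∞`, valued in extended reals. -/
def elog2 (x : ℝ) : EReal := if x ≤ 0 then ⊥ else ((Real.logb 2 x : ℝ) : EReal)

/-! ### Channels -/

/-- The Kronecker extension `id_R ⊗ N` of a linear map on matrices. -/
def idTensor (R : Type*) {A B : Type*} (N : MatC A →ₗ[ℂ] MatC B) :
    MatC (R × A) →ₗ[ℂ] MatC (R × B) where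
  toFun X := Matrix.of fun p q => N (Matrix.of fun a a' => X (p.1, a) (q.1, a')) p.2 q.2
  map_add' X Y := by
    ext p q
    show N (Matrix.of fun a a' => (X + Y) (p.1, a) (q.1, a')) p.2 q.2 = _
    have h : (Matrix.of fun a a' => (X + Y) (p.1, a) (q.1, a'))
        = (Matrix.of fun a a' => X (p.1, a) (q.1, a'))
          + (Matrix.of fun a a' => Y (p.1, a) (q.1, a')) := rfl
    rw [h, map_add]; rfl
  map_smul' c X := by
    ext p q
    show N (Matrix.of fun a a' => (c • X) (p.1, a) (q.1, a')) p.2 q.2 = _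
    have h : (Matrix.of fun a a' => (c • X) (p.1, a) (q.1, a'))
        = c • (Matrix.of fun a a' => X (p.1, a) (q.1, a')) := rfl
    rw [h, map_smul]; rfl

/-- The Kronecker extension `N ⊗ id_R`. -/
def tensorId (R : Type*) {A B : Type*} (N : MatC A →ₗ[ℂ] MatC B) :
    MatC (A × R) →ₗ[ℂ] MatC (B × R) where
  toFun X := Matrix.of fun p q => N (Matrix.of fun a a' => X (a, p.2) (a', q.2)) p.1 q.1
  map_add' X Y := by
    ext p q
    show N (Matrix.of fun a a' => (X + Y) (a, p.2) (a', q.2)) p.1 q.1 = _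
    have h : (Matrix.of fun a a' => (X + Y) (a, p.2) (a', q.2))
        = (Matrix.of fun a a' => X (a, p.2) (a', q.2))
          + (Matrix.of fun a a' => Y (a, p.2) (a', q.2)) := rfl
    rw [h, map_add]; rfl
  map_smul' c X := by
    ext p q
    show N (Matrix.of fun a a' => (c • X) (a, p.2) (a', q.2)) p.1 q.1 = _
    have h : (Matrix.of fun a a' => (c • X) (a, p.2) (a', q.2))
        = c • (Matrix.of fun a a' => X (a, p.2) (a', q.2)) := rfl
    rw [h, map_smul]; rfl

/-- Transport of a matrix map along equivalences of index types. -/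
def reindexChan {A A' B B' : Type*} (eA : A ≃ A') (eB : B ≃ B')
    (N : MatC A →ₗ[ℂ] MatC B) : MatC A' →ₗ[ℂ] MatC B' :=
  (Matrix.reindexLinearEquiv ℂ ℂ eB eB).toLinearMap ∘ₗ N ∘ₗ
    (Matrix.reindexLinearEquiv ℂ ℂ eA.symm eA.symm).toLinearMap

/-- The tensor product `N ⊗ M` of two matrix maps. -/
def tensorChan {A B C D : Type*} (N : MatC A →ₗ[ℂ] MatC B) (M : MatC C →ₗ[ℂ] MatC D) :
    MatC (A × C) →ₗ[ℂ] MatC (B × D) :=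
  tensorId D N ∘ₗ idTensor A M

/-- The `n`-fold tensor power `N^{⊗n}` of a matrix map, acting on matrices
indexed by `Fin n → A`. -/
def powChan {A B : Type*} (N : MatC A →ₗ[ℂ] MatC B) :
    (n : ℕ) → (MatC (Fin n → A) →ₗ[ℂ] MatC (Fin n → B))
  | 0 => reindexChan (Equiv.refl _) (Equiv.ofUnique (Fin 0 → A) (Fin 0 → B)) LinearMap.id
  | n + 1 =>
      reindexChan ((Fin.insertNthEquiv (fun _ => A) 0).symm : (Fin (n + 1) → A) ≃ A × (Fin n → A)).symm
        ((Fin.insertNthEquiv (fun _ => B) 0).symm : (Fin (n + 1) → B) ≃ B × (Fin n → B)).symm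
        (tensorChan N (powChan N n))

/-- Complete positivity and trace preservation (a quantum channel). -/
def IsCPTP {A B : Type*} [Fintype A] [Fintype B] (N : MatC A →ₗ[ℂ] MatC B) : Prop :=
  (∀ (R : Type) (fR : Fintype R) (X : MatC (R × A)),
      letI := fR
      X.PosSemidef → (idTensor R N X).PosSemidef) ∧
    ∀ X : MatC A, (N X).trace = X.trace

/-- The (unnormalized) maximally entangled projector `|Φ⟩⟨Φ|`. -/
def maxEnt (A : Type*) [DecidableEq A] : MatC (A × A) :=
  Matrix.of fun p q => (if p.1 = p.2 then (1 : ℂ) else 0) * (if q.1 = q.2 then 1 else 0)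

/-- The Choi matrix `J_N = (id_A ⊗ N)(|Φ⟩⟨Φ|)`. -/
def choiMat {A B : Type*} [DecidableEq A] (N : MatC A →ₗ[ℂ] MatC B) : MatC (A × B) :=
  idTensor A N (maxEnt A)

/-! ### State divergences -/

/-- The set of achievable Type II error values for tests with Type I error at most `ε`. -/
def betaSet {ι : Type*} [Fintype ι] [DecidableEq ι] (ε : ℝ) (ρ σ : MatC ι) : Set ℝ :=
  {x | ∃ T : MatC ι, T.PosSemidef ∧ (1 - T).PosSemidef ∧
    1 - ε ≤ ((T * ρ).trace).re ∧ x = ((T * σ).trace).re}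

/-- The hypothesis testing relative entropy `D_H^ε(ρ‖σ)`, valued in extended reals. -/
def DHe {ι : Type*} [Fintype ι] [DecidableEq ι] (ε : ℝ) (ρ σ : MatC ι) : EReal :=
  negLog2 (sInf (betaSet ε ρ σ))

/-- The Umegaki relative entropy `D(ρ‖σ)` (base 2), `+∞` if the support condition fails. -/
def relEnt {ι : Type*} [Fintype ι] [DecidableEq ι] (ρ σ : MatC ι) : EReal :=
  if SuppLe ρ σ then (((ρ * (matLog2 ρ - matLog2 σ)).trace).re : EReal) else ⊤

/-- The Petz Rényi divergence `D̄_α(ρ‖σ)` for `α ∈ (0,1)`, `+∞` when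
`tr[ρ^α σ^{1−α}] = 0`. -/
def petzD (α : ℝ) {ι : Type*} [Fintype ι] [DecidableEq ι] (ρ σ : MatC ι) : EReal :=
  if 0 < (((matPow ρ α * matPow σ (1 - α)).trace).re) then
    (((α - 1)⁻¹ * Real.logb 2 (((matPow ρ α * matPow σ (1 - α)).trace).re) : ℝ) : EReal)
  else ⊤

/-- The sandwiched Rényi divergence `D̃_α(ρ‖σ)` for `α > 1`. -/
def sandD (α : ℝ) {ι : Type*} [Fintype ι] [DecidableEq ι] (ρ σ : MatC ι) : EReal :=
  if SuppLe ρ σ then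
    ((((α - 1)⁻¹ *
        Real.logb 2
          (((matPow (matPow σ ((1 - α) / (2 * α)) * ρ * matPow σ ((1 - α) / (2 * α))) α).trace).re)) : ℝ) : EReal)
  else ⊤

/-- The max-relative entropy `D_max(ρ‖σ)`. -/
def Dmax {ι : Type*} [Fintype ι] (ρ σ : MatC ι) : EReal :=
  sInf {y : EReal | ∃ t : ℝ, ((t : ℂ) • σ - ρ).PosSemidef ∧ y = ((Real.logb 2 t : ℝ) : EReal)}

/-- Trace norm `‖X‖₁ = tr √(X†X)`. -/
def traceNorm {ι : Type*} [Fintype ι] [DecidableEq ι] (X : MatC ι) : ℝ :=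
  ((matPow (X.conjTranspose * X) 2⁻¹).trace).re

/-- Generalized fidelity of subnormalized states. -/
def genFid {ι : Type*} [Fintype ι] [DecidableEq ι] (ρ σ : MatC ι) : ℝ :=
  traceNorm (matPow ρ 2⁻¹ * matPow σ 2⁻¹) +
    Real.sqrt ((1 - (ρ.trace).re) * (1 - (σ.trace).re))

/-- Purified distance. -/
def purDist {ι : Type*} [Fintype ι] [DecidableEq ι] (ρ σ : MatC ι) : ℝ :=
  Real.sqrt (1 - (genFid ρ σ) ^ 2)

/-- The smooth max-relative entropy `D_max^ε(ρ‖σ)`. -/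
def DmaxSmooth (ε : ℝ) {ι : Type*} [Fintype ι] [DecidableEq ι] (ρ σ : MatC ι) : EReal :=
  sInf {y : EReal | ∃ ρ' : MatC ι, ρ'.PosSemidef ∧ ((ρ'.trace).re ≤ 1) ∧
    purDist ρ' ρ ≤ ε ∧ y = Dmax ρ' σ}

/-! ### Channel divergences -/

/-- A generalized state divergence: a function on pairs of matrices over every
finite system. -/
abbrev StateDiv :=
  ∀ (ι : Type) (_ : Fintype ι) (_ : DecidableEq ι), MatC ι → MatC ι → EReal

/-- The Umegaki relative entropy as a `StateDiv`. -/
def UmegakiD : StateDiv := fun ι fι dι ρ σ => @relEnt ι fι dι ρ σ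

/-- The sandwiched Rényi divergence as a `StateDiv`. -/
def SandD (α : ℝ) : StateDiv := fun ι fι dι ρ σ => @sandD α ι fι dι ρ σ

/-- The Petz Rényi divergence as a `StateDiv`. -/
def PetzD (α : ℝ) : StateDiv := fun ι fι dι ρ σ => @petzD α ι fι dι ρ σ

/-- The smooth max-relative entropy as a `StateDiv`. -/
def DmaxD (ε : ℝ) : StateDiv := fun ι fι dι ρ σ => @DmaxSmooth ε ι fι dι ρ σ

/-- The hypothesis-testing relative entropy as a `StateDiv`. -/
def DHD (ε : ℝ) : StateDiv := fun ι fι dι ρ σ => @DHe ι fι dι ε ρ σ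

/-- The channel divergence induced by a state divergence: supremum over all
finite reference systems `R` and input states `ψ` on `R × A`. -/
def chanDiv (D : StateDiv) {A B : Type} [Fintype A] [Fintype B] [DecidableEq B]
    (N M : MatC A →ₗ[ℂ] MatC B) : EReal :=
  sSup {x : EReal | ∃ (R : Type) (fR : Fintype R) (dR : DecidableEq R)
    (ψ : MatC (R × A)),
      letI := fR; letI := dR;
      IsDensity ψ ∧
        x = D (R × B) inferInstance inferInstance (idTensor R N ψ) (idTensor R M ψ)}

/-- The regularized channel divergence `sup_{n ≥ 1} (1/n) D(N^{⊗n}‖M^{⊗n})`. -/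
def regChanDiv (D : StateDiv) {A B : Type} [Fintype A] [Fintype B] [DecidableEq B]
    (N M : MatC A →ₗ[ℂ] MatC B) : EReal :=
  sSup {x : EReal | ∃ n : ℕ, 1 ≤ n ∧
    x = (((n : ℝ)⁻¹ : ℝ) : EReal) * chanDiv D (powChan N n) (powChan M n)}

/-- The amortized channel divergence. -/
def amortChanDiv (D : StateDiv) {A B : Type} [Fintype A] [Fintype B] [DecidableEq A]
    [DecidableEq B] (N M : MatC A →ₗ[ℂ] MatC B) : EReal :=
  sSup {x : EReal | ∃ (R : Type) (fR : Fintype R) (dR : DecidableEq R)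
    (ψ φ : MatC (R × A)),
      letI := fR; letI := dR;
      IsDensity ψ ∧ IsDensity φ ∧
        x = D (R × B) inferInstance inferInstance (idTensor R N ψ) (idTensor R M φ)
            - D (R × A) inferInstance inferInstance ψ φ}


/-! ### Discrimination strategies -/

/-- Tensor product of matrices over a (dependent) family of systems. -/
def piKron {n : ℕ} {κ : Fin n → Type} (X : ∀ i, MatC (κ i)) : MatC (∀ i, κ i) :=
  Matrix.of fun f g => ∏ i, X i (f i) (g i)

/-- A coherent (parallel) strategy for discriminating `n` uses of channels
`A → B`: a reference system `R`, an input state on `R × A^n` and a binary test. -/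
structure CohStrategy (A B : Type) [Fintype A] [DecidableEq A] [Fintype B] [DecidableEq B]
    (n : ℕ) where
  R : Type
  [fR : Fintype R]
  [dR : DecidableEq R]
  ψ : MatC (R × (Fin n → A))
  hψ : IsDensity ψ
  T : MatC (R × (Fin n → B))
  hT₁ : T.PosSemidef
  hT₂ : (1 - T).PosSemidef

attribute [instance] CohStrategy.fR CohStrategy.dR

/-- Type I error of a coherent strategy against the null hypothesis channel `N`. -/
def CohStrategy.typeI {A B : Type} [Fintype A] [DecidableEq A] [Fintype B] [DecidableEq B]
    {n : ℕ} (N : MatC A →ₗ[ℂ] MatC B) (S : CohStrategy A B n) : ℝ :=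
  (((1 - S.T) * idTensor S.R (powChan N n) S.ψ).trace).re

/-- Type II error of a coherent strategy against the alternative channel `M`. -/
def CohStrategy.typeII {A B : Type} [Fintype A] [DecidableEq A] [Fintype B] [DecidableEq B]
    {n : ℕ} (M : MatC A →ₗ[ℂ] MatC B) (S : CohStrategy A B n) : ℝ :=
  ((S.T * idTensor S.R (powChan M n) S.ψ).trace).re

/-- **Conjecture 1** (exponentially strong converse of channel hypothesis testing
under coherent strategies). -/
def Conjecture1 : Prop :=
  ∀ (A B : Type) (fA : Fintype A) (dA : DecidableEq A) (fB : Fintype B) (dB : DecidableEq B),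
    letI := fA; letI := dA; letI := fB; letI := dB;
    ∀ (N M : MatC A →ₗ[ℂ] MatC B), IsCPTP N → IsCPTP M → (choiMat N).PosDef →
      ∀ S : (n : ℕ) → CohStrategy A B n,
        regChanDiv UmegakiD N M <
          Filter.liminf
            (fun n : ℕ => -((((n : ℝ)⁻¹ : ℝ) : EReal) * elog2 ((S n).typeII M)))
            Filter.atTop →
        ∃ c : ℝ, 0 < c ∧ ∀ᶠ n : ℕ in Filter.atTop,
          1 - (S n).typeI N ≤ (2 : ℝ) ^ (-(c * n))


/-- A sequential (adaptive) strategy for discriminating `m + 1` uses of channels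
`A → B`: reference systems `R 0, …, R m`, an initial state on `R 0 × A`, adaptive
update channels `P i : R i × B → R (i+1) × A`, and a final binary test. -/
structure SeqStrategy (A B : Type) [Fintype A] [DecidableEq A] [Fintype B] [DecidableEq B]
    (m : ℕ) where
  R : Fin (m + 1) → Type
  [fR : ∀ i, Fintype (R i)]
  [dR : ∀ i, DecidableEq (R i)]
  ψ : MatC (R 0 × A)
  hψ : IsDensity ψ
  P : ∀ i : Fin m, MatC (R i.castSucc × B) →ₗ[ℂ] MatC (R i.succ × A)
  hP : ∀ i, IsCPTP (P i)
  T : MatC (R (Fin.last m) × B)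
  hT₁ : T.PosSemidef
  hT₂ : (1 - T).PosSemidef

attribute [instance] SeqStrategy.fR SeqStrategy.dR

/-- The intermediate testing states of a sequential strategy when the unknown
channel is `N`: after `i + 1` uses of the channel, on system `R i × B`. -/
def SeqStrategy.states {A B : Type} [Fintype A] [DecidableEq A] [Fintype B] [DecidableEq B]
    {m : ℕ} (S : SeqStrategy A B m) (N : MatC A →ₗ[ℂ] MatC B) :
    ∀ i : Fin (m + 1), MatC (S.R i × B) :=
  Fin.induction (idTensor (S.R 0) N S.ψ)
    (fun i prev => idTensor (S.R i.succ) N (S.P i prev))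

/-- The final testing state of a sequential strategy for channel `N`. -/
def SeqStrategy.finalState {A B : Type} [Fintype A] [DecidableEq A] [Fintype B]
    [DecidableEq B] {m : ℕ} (S : SeqStrategy A B m) (N : MatC A →ₗ[ℂ] MatC B) :
    MatC (S.R (Fin.last m) × B) :=
  S.states N (Fin.last m)

/-- Type I error of a sequential strategy against the null hypothesis channel `N`. -/
def SeqStrategy.typeI {A B : Type} [Fintype A] [DecidableEq A] [Fintype B] [DecidableEq B]
    {m : ℕ} (N : MatC A →ₗ[ℂ] MatC B) (S : SeqStrategy A B m) : ℝ :=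
  (((1 - S.T) * S.finalState N).trace).re

/-- Type II error of a sequential strategy against the alternative channel `M`. -/
def SeqStrategy.typeII {A B : Type} [Fintype A] [DecidableEq A] [Fintype B] [DecidableEq B]
    {m : ℕ} (M : MatC A →ₗ[ℂ] MatC B) (S : SeqStrategy A B m) : ℝ :=
  ((S.T * S.finalState M).trace).re

/-- A product strategy for discriminating `n` uses of channels `A → B`:
reference systems `R i`, product input states `φ i` on `R i × A`, and a binary
test on the joint output. -/
structure ProdStrategy (A B : Type) [Fintype A] [DecidableEq A] [Fintype B] [DecidableEq B]
    (n : ℕ) where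
  R : Fin n → Type
  [fR : ∀ i, Fintype (R i)]
  [dR : ∀ i, DecidableEq (R i)]
  φ : ∀ i, MatC (R i × A)
  hφ : ∀ i, IsDensity (φ i)
  T : MatC (∀ i, R i × B)
  hT₁ : T.PosSemidef
  hT₂ : (1 - T).PosSemidef

attribute [instance] ProdStrategy.fR ProdStrategy.dR

/-- The testing state of a product strategy for channel `N`. -/
def ProdStrategy.state {A B : Type} [Fintype A] [DecidableEq A] [Fintype B] [DecidableEq B]
    {n : ℕ} (S : ProdStrategy A B n) (N : MatC A →ₗ[ℂ] MatC B) : MatC (∀ i, S.R i × B) :=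
  piKron fun i => idTensor (S.R i) N (S.φ i)

/-- Type I error of a product strategy against the null hypothesis channel `N`. -/
def ProdStrategy.typeI {A B : Type} [Fintype A] [DecidableEq A] [Fintype B] [DecidableEq B]
    {n : ℕ} (N : MatC A →ₗ[ℂ] MatC B) (S : ProdStrategy A B n) : ℝ :=
  (((1 - S.T) * S.state N).trace).re

/-- Type II error of a product strategy against the alternative channel `M`. -/
def ProdStrategy.typeII {A B : Type} [Fintype A] [DecidableEq A] [Fintype B] [DecidableEq B]
    {n : ℕ} (M : MatC A →ₗ[ℂ] MatC B) (S : ProdStrategy A B n) : ℝ :=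
  ((S.T * S.state M).trace).re

/-- Extra: the `n`-fold power of a channel acting on matrices indexed by
`Fin n → R × A` (reference `R` paired with each channel input). -/
noncomputable def pairPow (R : Type) {A B : Type} (N : MatC A →ₗ[ℂ] MatC B) (n : ℕ) :
    MatC (Fin n → R × A) →ₗ[ℂ] MatC (Fin n → R × B) :=
  reindexChan (Equiv.arrowProdEquivProdArrow (Fin n) (fun _ => R) (fun _ => A)).symm
    (Equiv.arrowProdEquivProdArrow (Fin n) (fun _ => R) (fun _ => B)).symm
    (idTensor (Fin n → R) (powChan N n))

/-- The optimal hypothesis-testing relative entropy over product strategies. -/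
noncomputable def DHpro (ε : ℝ) {A B : Type} [Fintype A] [DecidableEq A] [Fintype B]
    [DecidableEq B] (N M : MatC A →ₗ[ℂ] MatC B) (n : ℕ) : EReal :=
  sSup {x : EReal | ∃ (R : Fin n → Type) (fR : ∀ i, Fintype (R i))
    (dR : ∀ i, DecidableEq (R i)) (φ : ∀ i, MatC (R i × A)),
      letI := fR; letI := dR;
      (∀ i, IsDensity (φ i)) ∧
        x = DHe ε (piKron fun i => idTensor (R i) N (φ i))
              (piKron fun i => idTensor (R i) M (φ i))}

/-- The optimal hypothesis-testing relative entropy over sequential strategies for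
`m + 1` channel uses. -/
noncomputable def DHseq (ε : ℝ) {A B : Type} [Fintype A] [DecidableEq A] [Fintype B]
    [DecidableEq B] (N M : MatC A →ₗ[ℂ] MatC B) (m : ℕ) : EReal :=
  sSup {x : EReal | ∃ S : SeqStrategy A B m,
    x = DHe ε (S.finalState N) (S.finalState M)}

/-- The strong converse exponent of channel discrimination under product strategies. -/
noncomputable def scExpPRO (r : ℝ) {A B : Type} [Fintype A] [DecidableEq A] [Fintype B]
    [DecidableEq B] (N M : MatC A →ₗ[ℂ] MatC B) : EReal :=
  sInf {e : EReal | ∃ S : (n : ℕ) → ProdStrategy A B n,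
    (Filter.limsup (fun n : ℕ => (((n : ℝ)⁻¹ : ℝ) : EReal) * elog2 ((S n).typeII M))
        Filter.atTop ≤ ((-r : ℝ) : EReal)) ∧
    e = -Filter.liminf (fun n : ℕ => (((n : ℝ)⁻¹ : ℝ) : EReal) * elog2 (1 - (S n).typeI N))
        Filter.atTop}

/-- The error exponent of channel discrimination under product strategies. -/
noncomputable def erExpPRO (r : ℝ) {A B : Type} [Fintype A] [DecidableEq A] [Fintype B]
    [DecidableEq B] (N M : MatC A →ₗ[ℂ] MatC B) : EReal :=
  sSup {e : EReal | ∃ S : (n : ℕ) → ProdStrategy A B n,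
    (Filter.limsup (fun n : ℕ => (((n : ℝ)⁻¹ : ℝ) : EReal) * elog2 ((S n).typeII M))
        Filter.atTop ≤ ((-r : ℝ) : EReal)) ∧
    e = -Filter.limsup (fun n : ℕ => (((n : ℝ)⁻¹ : ℝ) : EReal) * elog2 ((S n).typeI N))
        Filter.atTop}

/-- The error exponent of channel discrimination under coherent strategies. -/
noncomputable def erExpCOH (r : ℝ) {A B : Type} [Fintype A] [DecidableEq A] [Fintype B]
    [DecidableEq B] (N M : MatC A →ₗ[ℂ] MatC B) : EReal :=
  sSup {e : EReal | ∃ S : (n : ℕ) → CohStrategy A B n,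
    (Filter.limsup (fun n : ℕ => (((n : ℝ)⁻¹ : ℝ) : EReal) * elog2 ((S n).typeII M))
        Filter.atTop ≤ ((-r : ℝ) : EReal)) ∧
    e = -Filter.limsup (fun n : ℕ => (((n : ℝ)⁻¹ : ℝ) : EReal) * elog2 ((S n).typeI N))
        Filter.atTop}

/-!
Taking `n = 1` in the regularization gives the first inequality. For the second, peel off one
channel use at a time: up to a relabelling of the systems, `id_R ⊗ N^{⊗(n+1)}` is `N` applied
after `N^{⊗n}`, with the outputs of `N^{⊗n}` moved into the reference system. By the definition of
the amortized divergence this last use of the channel raises the divergence by at most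
`D^A(N‖M)`, and data processing makes `D` invariant under the relabellings. Induction from
`n = 0`, where both outputs coincide and normalization gives `0`, yields
`D(N^{⊗n}‖M^{⊗n}) ≤ n · D^A(N‖M)`.
-/

theorem Matrix.trace_submatrix_equiv {ι κ α : Type*} [Fintype ι] [Fintype κ] [AddCommMonoid α]
    (e : ι ≃ κ) (X : Matrix κ κ α) : (X.submatrix e e).trace = X.trace :=
  e.sum_comp fun i => X i i

section Relabel

variable {R A B C : Type}

theorem idTensor_id : idTensor R (LinearMap.id : MatC A →ₗ[ℂ] MatC A) = LinearMap.id := by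
  ext X p q
  rfl

theorem idTensor_idTensor (F : MatC A →ₗ[ℂ] MatC B) (X : MatC (R × (C × A))) :
    idTensor R (idTensor C F) X =
      (idTensor (R × C) F (X.submatrix (Equiv.prodAssoc R C A) (Equiv.prodAssoc R C A))).submatrix
        (Equiv.prodAssoc R C B).symm (Equiv.prodAssoc R C B).symm := rfl

def prodSwapAssoc (R C A : Type) : (R × C) × A ≃ R × (A × C) :=
  (Equiv.prodAssoc R C A).trans ((Equiv.refl R).prodCongr (Equiv.prodComm C A))

theorem idTensor_tensorId (F : MatC A →ₗ[ℂ] MatC B) (X : MatC (R × (A × C))) :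
    idTensor R (tensorId C F) X =
      (idTensor (R × C) F (X.submatrix (prodSwapAssoc R C A) (prodSwapAssoc R C A))).submatrix
        (prodSwapAssoc R C B).symm (prodSwapAssoc R C B).symm := rfl

theorem idTensor_reindexChan {A' B' : Type} (eA : A ≃ A') (eB : B ≃ B')
    (F : MatC A →ₗ[ℂ] MatC B) (X : MatC (R × A')) :
    idTensor R (reindexChan eA eB F) X =
      (idTensor R F (X.submatrix ((Equiv.refl R).prodCongr eA) ((Equiv.refl R).prodCongr eA))).submatrix
        ((Equiv.refl R).prodCongr eB).symm ((Equiv.refl R).prodCongr eB).symm := rfl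

theorem trace_idTensor [Fintype R] [Fintype A] [Fintype B] {F : MatC A →ₗ[ℂ] MatC B}
    (hF : ∀ X : MatC A, (F X).trace = X.trace) (X : MatC (R × A)) :
    (idTensor R F X).trace = X.trace := by
  simp only [Matrix.trace, Matrix.diag, Fintype.sum_prod_type]
  exact Finset.sum_congr rfl fun r _ => hF (Matrix.of fun a a' => X (r, a) (r, a'))

end Relabel

section CPTP

variable {A B C : Type} [Fintype A] [Fintype B] [Fintype C]

theorem isCPTP_id : IsCPTP (LinearMap.id : MatC A →ₗ[ℂ] MatC A) :=
  ⟨fun R fR X hX => by rwa [idTensor_id], fun _ => rfl⟩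

theorem IsCPTP.comp {F : MatC B →ₗ[ℂ] MatC C} {G : MatC A →ₗ[ℂ] MatC B}
    (hF : IsCPTP F) (hG : IsCPTP G) : IsCPTP (F ∘ₗ G) :=
  ⟨fun R fR X hX => hF.1 R fR _ (hG.1 R fR X hX), fun X => (hF.2 _).trans (hG.2 X)⟩

theorem IsCPTP.reindexChan {A' B' : Type} [Fintype A'] [Fintype B'] (eA : A ≃ A') (eB : B ≃ B')
    {F : MatC A →ₗ[ℂ] MatC B} (hF : IsCPTP F) : IsCPTP (reindexChan eA eB F) := by
  refine ⟨fun R fR X hX => ?_, fun X => ?_⟩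
  · rw [idTensor_reindexChan]
    exact (hF.1 R fR _ (hX.submatrix _)).submatrix _
  · exact (Matrix.trace_submatrix_equiv eB.symm _).trans
      ((hF.2 _).trans (Matrix.trace_submatrix_equiv eA _))

theorem IsCPTP.idTensor {F : MatC A →ₗ[ℂ] MatC B} (hF : IsCPTP F) :
    IsCPTP (idTensor C F) := by
  refine ⟨fun R fR X hX => ?_, trace_idTensor hF.2⟩
  rw [idTensor_idTensor]
  exact (hF.1 (R × C) inferInstance _ (hX.submatrix _)).submatrix _

theorem IsCPTP.tensorId {F : MatC A →ₗ[ℂ] MatC B} (hF : IsCPTP F) :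
    IsCPTP (tensorId C F) := by
  refine ⟨fun R fR X hX => ?_, fun X => ?_⟩
  · rw [idTensor_tensorId]
    exact (hF.1 (R × C) inferInstance _ (hX.submatrix _)).submatrix _
  · have h := trace_idTensor (R := C) hF.2 (X.submatrix (Equiv.prodComm C A) (Equiv.prodComm C A))
    rw [Matrix.trace_submatrix_equiv] at h
    exact (Matrix.trace_submatrix_equiv (Equiv.prodComm C B).symm _).trans h

theorem IsCPTP.tensorChan {A' B' : Type} [Fintype A'] [Fintype B'] {F : MatC A →ₗ[ℂ] MatC B}
    {F' : MatC A' →ₗ[ℂ] MatC B'} (hF : IsCPTP F) (hF' : IsCPTP F') : IsCPTP (tensorChan F F') :=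
  hF.tensorId.comp hF'.idTensor

theorem IsCPTP.powChan {N : MatC A →ₗ[ℂ] MatC B} (hN : IsCPTP N) (n : ℕ) :
    IsCPTP (powChan N n) := by
  induction n with
  | zero => exact isCPTP_id.reindexChan _ _
  | succ n ih => exact (hN.tensorChan ih).reindexChan _ _

theorem IsDensity.submatrix {ι κ : Type} [Fintype ι] [Fintype κ] {ρ : MatC κ} (hρ : IsDensity ρ)
    (e : ι ≃ κ) : IsDensity (ρ.submatrix e e) :=
  ⟨hρ.1.submatrix e, (Matrix.trace_submatrix_equiv e ρ).trans hρ.2⟩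

theorem IsDensity.idTensor {R : Type} [Fintype R] {F : MatC A →ₗ[ℂ] MatC B} (hF : IsCPTP F)
    {ψ : MatC (R × A)} (hψ : IsDensity ψ) : IsDensity (idTensor R F ψ) :=
  ⟨hF.1 R inferInstance ψ hψ.1, (trace_idTensor hF.2 ψ).trans hψ.2⟩

end CPTP

theorem EReal.le_coe_add_one_mul_of_sub_le {a b S : EReal} {r : ℝ} (hr : 0 ≤ r)
    (h₁ : a - b ≤ S) (h₂ : b ≤ r * S) : a ≤ ((r + 1 : ℝ) : EReal) * S := by
  by_cases hS : S = ⊤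
  · rw [hS, EReal.coe_mul_top_of_pos (by linarith)]
    exact le_top
  have hrS : (r : EReal) * S ≠ ⊤ :=
    (EReal.mul_ne_top _ _).2 ⟨.inl (EReal.coe_ne_bot r), .inl (EReal.coe_nonneg.2 hr),
      .inl (EReal.coe_ne_top r), .inr hS⟩
  have hb : b ≠ ⊤ := ne_top_of_le_ne_top hrS h₂
  calc a ≤ S + b := (EReal.sub_le_iff_le_add (.inr hS) (.inl hb)).1 h₁
    _ ≤ S + r * S := add_le_add_right h₂ S
    _ = ((r + 1 : ℝ) : EReal) * S := by
      rw [EReal.coe_add, EReal.coe_one, EReal.right_distrib_of_nonneg (EReal.coe_nonneg.2 hr)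
        zero_le_one, one_mul, add_comm]

theorem EReal.coe_inv_mul_le_of_le_mul {x S : EReal} {r : ℝ} (hr : 0 < r) (h : x ≤ r * S) :
    ((r⁻¹ : ℝ) : EReal) * x ≤ S := by
  rwa [EReal.coe_inv, ← EReal.div_eq_inv_mul,
    EReal.div_le_iff_le_mul (EReal.coe_pos.2 hr) (EReal.coe_ne_top r)]

namespace StateDiv

def DataProcessing (D : StateDiv) : Prop :=
  ∀ (ι₁ ι₂ : Type) (f₁ : Fintype ι₁) (d₁ : DecidableEq ι₁)
      (f₂ : Fintype ι₂) (d₂ : DecidableEq ι₂) (E : MatC ι₁ →ₗ[ℂ] MatC ι₂),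
    letI := f₁; letI := d₁; letI := f₂; letI := d₂;
    IsCPTP E → ∀ ρ σ : MatC ι₁, IsDensity ρ → IsDensity σ →
      D ι₂ f₂ d₂ (E ρ) (E σ) ≤ D ι₁ f₁ d₁ ρ σ

def Normalized (D : StateDiv) : Prop :=
  ∀ (ι : Type) (fι : Fintype ι) (dι : DecidableEq ι) (ρ : MatC ι),
    letI := fι; letI := dι;
    IsDensity ρ → D ι fι dι ρ ρ = 0

variable {D : StateDiv}

theorem DataProcessing.submatrix_le (hD : D.DataProcessing) {ι κ : Type} [Fintype ι]
    [DecidableEq ι] [Fintype κ] [DecidableEq κ] (e : κ ≃ ι) {ρ σ : MatC ι}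
    (hρ : IsDensity ρ) (hσ : IsDensity σ) :
    D κ inferInstance inferInstance (ρ.submatrix e e) (σ.submatrix e e) ≤
      D ι inferInstance inferInstance ρ σ :=
  hD ι κ _ _ _ _ _ (isCPTP_id.reindexChan e (Equiv.refl κ)) ρ σ hρ hσ

theorem DataProcessing.submatrix_eq (hD : D.DataProcessing) {ι κ : Type} [Fintype ι]
    [DecidableEq ι] [Fintype κ] [DecidableEq κ] (e : κ ≃ ι) {ρ σ : MatC ι}
    (hρ : IsDensity ρ) (hσ : IsDensity σ) :
    D κ inferInstance inferInstance (ρ.submatrix e e) (σ.submatrix e e) =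
      D ι inferInstance inferInstance ρ σ := by
  refine (hD.submatrix_le e hρ hσ).antisymm ?_
  simpa using hD.submatrix_le e.symm (hρ.submatrix e) (hσ.submatrix e)

end StateDiv

theorem le_amortChanDiv (D : StateDiv) {A B R : Type} [Fintype A] [DecidableEq A] [Fintype B]
    [DecidableEq B] [Fintype R] [DecidableEq R] (N M : MatC A →ₗ[ℂ] MatC B)
    {ψ φ : MatC (R × A)} (hψ : IsDensity ψ) (hφ : IsDensity φ) :
    D (R × B) inferInstance inferInstance (idTensor R N ψ) (idTensor R M φ) -
        D (R × A) inferInstance inferInstance ψ φ ≤ amortChanDiv D N M :=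
  le_sSup ⟨R, inferInstance, inferInstance, ψ, φ, hψ, hφ, rfl⟩

namespace StateDiv.DataProcessing

variable {D : StateDiv} (hD : D.DataProcessing)
  {A B A' B' R : Type} [Fintype A] [DecidableEq A] [Fintype B] [DecidableEq B]
  [Fintype A'] [Fintype B'] [DecidableEq B'] [Fintype R] [DecidableEq R]
  {N M : MatC A →ₗ[ℂ] MatC B} (hN : IsCPTP N) (hM : IsCPTP M)
include hD hN hM

omit [DecidableEq A] in
theorem chanDiv_le_powChan_one :
    chanDiv D N M ≤ chanDiv D (powChan N 1) (powChan M 1) := by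
  refine sSup_le ?_
  rintro _ ⟨R, fR, dR, ψ, hψ, rfl⟩
  set eA := (Equiv.refl R).prodCongr (Equiv.funUnique (Fin 1) A)
  set eB := (Equiv.refl R).prodCongr (Equiv.funUnique (Fin 1) B)
  have hone : ∀ F : MatC A →ₗ[ℂ] MatC B,
      idTensor R (powChan F 1) (ψ.submatrix eA eA) = (idTensor R F ψ).submatrix eB eB :=
    fun _ => rfl
  refine le_sSup ⟨R, fR, dR, ψ.submatrix eA eA, hψ.submatrix eA, ?_⟩
  rw [hone, hone, hD.submatrix_eq eB (hψ.idTensor hN) (hψ.idTensor hM)]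

/-- The outputs of `N'` and `M'` serve as the two input states, on reference `R × B'`, in the
definition of `D^A(N‖M)`. -/
theorem tensorChan_sub_le {N' M' : MatC A' →ₗ[ℂ] MatC B'} (hN' : IsCPTP N') (hM' : IsCPTP M')
    {ψ : MatC (R × (A × A'))} (hψ : IsDensity ψ) :
    D (R × (B × B')) inferInstance inferInstance
        (idTensor R (tensorChan N N') ψ) (idTensor R (tensorChan M M') ψ) -
      D ((R × A) × B') inferInstance inferInstance
        (idTensor (R × A) N' (ψ.submatrix (Equiv.prodAssoc R A A') (Equiv.prodAssoc R A A')))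
        (idTensor (R × A) M' (ψ.submatrix (Equiv.prodAssoc R A A') (Equiv.prodAssoc R A A')))
      ≤ amortChanDiv D N M := by
  set ψ' := ψ.submatrix (Equiv.prodAssoc R A A') (Equiv.prodAssoc R A A')
  have hψ' : IsDensity ψ' := hψ.submatrix _
  set e : (R × B') × A ≃ (R × A) × B' := (prodSwapAssoc R B' A).trans (Equiv.prodAssoc R A B').symm
  set f := (prodSwapAssoc R B' B).symm
  have hN'ψ := hψ'.idTensor hN'
  have hM'ψ := hψ'.idTensor hM'
  have hout : ∀ (F : MatC A →ₗ[ℂ] MatC B) (F' : MatC A' →ₗ[ℂ] MatC B'),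
      idTensor R (tensorChan F F') ψ =
        (idTensor (R × B') F ((idTensor (R × A) F' ψ').submatrix e e)).submatrix f f :=
    fun _ _ => rfl
  rw [hout, hout, hD.submatrix_eq f ((hN'ψ.submatrix e).idTensor hN)
    ((hM'ψ.submatrix e).idTensor hM), ← hD.submatrix_eq e hN'ψ hM'ψ]
  exact le_amortChanDiv D N M (hN'ψ.submatrix e) (hM'ψ.submatrix e)

theorem idTensor_powChan_le (hnorm : D.Normalized) (n : ℕ) {R : Type} [Fintype R] [DecidableEq R]
    {ψ : MatC (R × (Fin n → A))} (hψ : IsDensity ψ) :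
    D (R × (Fin n → B)) inferInstance inferInstance
        (idTensor R (powChan N n) ψ) (idTensor R (powChan M n) ψ) ≤
      (n : ℝ) * amortChanDiv D N M := by
  induction n generalizing R with
  | zero =>
    have hsame : idTensor R (powChan M 0) ψ = idTensor R (powChan N 0) ψ := rfl
    rw [hsame, hnorm _ _ _ _ (hψ.idTensor (hN.powChan 0))]
    simp
  | succ n ih =>
    simp only [powChan, idTensor_reindexChan]
    rw [hD.submatrix_eq _ ((hψ.submatrix _).idTensor ((hN.tensorChan (hN.powChan n))))
      ((hψ.submatrix _).idTensor ((hM.tensorChan (hM.powChan n))))]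
    push_cast
    exact EReal.le_coe_add_one_mul_of_sub_le (Nat.cast_nonneg n)
      (hD.tensorChan_sub_le hN hM (hN.powChan n) (hM.powChan n) (hψ.submatrix _))
      (ih (hψ.submatrix _ |>.submatrix _))

end StateDiv.DataProcessing

theorem stmt8_general (D : StateDiv)
    (hdpi : ∀ (ι₁ ι₂ : Type) (f₁ : Fintype ι₁) (d₁ : DecidableEq ι₁)
        (f₂ : Fintype ι₂) (d₂ : DecidableEq ι₂) (E : MatC ι₁ →ₗ[ℂ] MatC ι₂),
      letI := f₁; letI := d₁; letI := f₂; letI := d₂;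
      IsCPTP E → ∀ ρ σ : MatC ι₁, IsDensity ρ → IsDensity σ →
        D ι₂ f₂ d₂ (E ρ) (E σ) ≤ D ι₁ f₁ d₁ ρ σ)
    (hnorm : ∀ (ι : Type) (fι : Fintype ι) (dι : DecidableEq ι) (ρ : MatC ι),
      letI := fι; letI := dι;
      IsDensity ρ → D ι fι dι ρ ρ = 0)
    {A B : Type} [Fintype A] [DecidableEq A] [Fintype B] [DecidableEq B]
    (N M : MatC A →ₗ[ℂ] MatC B) (hN : IsCPTP N) (hM : IsCPTP M) :
    chanDiv D N M ≤ regChanDiv D N M ∧ regChanDiv D N M ≤ amortChanDiv D N M := by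
  have hD : D.DataProcessing := hdpi
  constructor
  · refine (hD.chanDiv_le_powChan_one hN hM).trans (le_sSup ⟨1, le_rfl, ?_⟩)
    norm_num
  · refine sSup_le ?_
    rintro _ ⟨n, hn, rfl⟩
    refine EReal.coe_inv_mul_le_of_le_mul (by positivity) (sSup_le ?_)
    rintro _ ⟨R, _, _, ψ, hψ, rfl⟩
    exact hD.idTensor_powChan_le hN hM hnorm n hψ

theorem stmt8 (D : StateDiv)
    (hdpi : ∀ (ι₁ ι₂ : Type) (f₁ : Fintype ι₁) (d₁ : DecidableEq ι₁)
        (f₂ : Fintype ι₂) (d₂ : DecidableEq ι₂) (E : MatC ι₁ →ₗ[ℂ] MatC ι₂),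
      letI := f₁; letI := d₁; letI := f₂; letI := d₂;
      IsCPTP E → ∀ ρ σ : MatC ι₁, IsDensity ρ → IsDensity σ →
        D ι₂ f₂ d₂ (E ρ) (E σ) ≤ D ι₁ f₁ d₁ ρ σ)
    (hsuper : ∀ (ι₁ ι₂ : Type) (f₁ : Fintype ι₁) (d₁ : DecidableEq ι₁)
        (f₂ : Fintype ι₂) (d₂ : DecidableEq ι₂) (ρ₁ σ₁ : MatC ι₁) (ρ₂ σ₂ : MatC ι₂),
      letI := f₁; letI := d₁; letI := f₂; letI := d₂;
      IsDensity ρ₁ → IsDensity σ₁ → IsDensity ρ₂ → IsDensity σ₂ →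
        D ι₁ f₁ d₁ ρ₁ σ₁ + D ι₂ f₂ d₂ ρ₂ σ₂ ≤
          D (ι₁ × ι₂) inferInstance inferInstance (ρ₁ ⊗ₖ ρ₂) (σ₁ ⊗ₖ σ₂))
    (hnorm : ∀ (ι : Type) (fι : Fintype ι) (dι : DecidableEq ι) (ρ : MatC ι),
      letI := fι; letI := dι;
      IsDensity ρ → D ι fι dι ρ ρ = 0)
    {A B : Type} [Fintype A] [DecidableEq A] [Fintype B] [DecidableEq B]
    (N M : MatC A →ₗ[ℂ] MatC B) (hN : IsCPTP N) (hM : IsCPTP M) :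
    chanDiv D N M ≤ regChanDiv D N M ∧ regChanDiv D N M ≤ amortChanDiv D N M :=
  stmt8_general D hdpi hnorm N M hN hM

end
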